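/- arXiv:2503.08924 — 6 statements merged into one kernel-verified Lean document; each statement's English description precedes it below -/
import Mathlib

section
/- Let 0 < r < R and let (x0,y0) be a real point on the cutcurve, i.e., such that there exists z0 ∈ ℝ with T(x0,y0,z0) = 0 and Q(x0,y0,z0) = 0, where T(x,y,z) = z^4 + 2(R^2-r^2+x^2+y^2)z^2 + (R^2+2Rr+r^2-x^2-y^2)(R^2-2Rr+r^2-x^2-y^2) and Q(x,y,z) = z^2 + q1(x,y)z + q0(x,y). Then sres1(x0,y0) = q1(x0,y0)*(q1(x0,y0)^2 + p2(x0,y0) - 2*q0(x0,y0)) = 0 if and only if q1(x0,y0) = 0. -/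
/-- Let `0 < r < R` and let `(x0,y0)` be a point on the cutcurve, i.e. there is a
real `z0` with `T(x0,y0,z0) = Q(x0,y0,z0) = 0`.  Then
`sres1(x0,y0) = q1 (q1^2 + p2 - 2 q0) = 0` iff `q1(x0,y0) = 0`. -/
theorem stmt7 (R r a b d e f g h i j x0 y0 z0 : ℝ) (hr : 0 < r) (hrR : r < R)
    (hT : z0 ^ 4 + 2 * (R ^ 2 - r ^ 2 + x0 ^ 2 + y0 ^ 2) * z0 ^ 2
      + (R ^ 2 + 2 * R * r + r ^ 2 - x0 ^ 2 - y0 ^ 2)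
        * (R ^ 2 - 2 * R * r + r ^ 2 - x0 ^ 2 - y0 ^ 2) = 0)
    (hQ : z0 ^ 2 + (e * x0 + f * y0 + i) * z0
      + (a * x0 ^ 2 + b * y0 ^ 2 + d * x0 * y0 + g * x0 + h * y0 + j) = 0) :
    (e * x0 + f * y0 + i)
        * ((e * x0 + f * y0 + i) ^ 2 + 2 * (R ^ 2 - r ^ 2 + x0 ^ 2 + y0 ^ 2)
          - 2 * (a * x0 ^ 2 + b * y0 ^ 2 + d * x0 * y0 + g * x0 + h * y0 + j)) = 0
      ↔ e * x0 + f * y0 + i = 0 := by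
  have hpos : (e * x0 + f * y0 + i) ^ 2 + 2 * (R ^ 2 - r ^ 2 + x0 ^ 2 + y0 ^ 2)
      - 2 * (a * x0 ^ 2 + b * y0 ^ 2 + d * x0 * y0 + g * x0 + h * y0 + j) > 0 := by
    nlinarith [sq_nonneg (e * x0 + f * y0 + i + z0), sq_nonneg z0, sq_nonneg x0, sq_nonneg y0,
      sq_nonneg (R - r), sq_nonneg (R + r), mul_pos hr (hr.trans hrR)]
  constructor
  · intro hmul
    rcases mul_eq_zero.mp hmul with h1 | h2
    · exact h1
    · exact absurd h2 (ne_of_gt hpos)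
  · intro h1; rw [h1]; ring
end

section
/- A real point (a,b) lies in the projection onto the plane z=0 of the real intersection curve of the torus T = 0 and the quadric Q = 0 if and only if S0(a,b) = 0, Δ_T(a,b) ≤ 0 and Δ_Q(a,b) ≥ 0, where S0 = Res_z(T,Q), Δ_T = p0 and Δ_Q = q1^2 - 4q0. -/
/-!
Dividing the torus polynomial `T = z^4 + p2 z^2 + p0` by the monic quadric `Q = z^2 + q1 z + q0`
leaves a linear remainder `c1 z + c0`, so the common roots of `T` and `Q` are those of `Q` and
`c1 z + c0`. The resultant of `Q` and `c1 z + c0` is `(c1 ρ₊ + c0)(c1 ρ₋ + c0)`, where `ρ₊`, `ρ₋`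
are the roots of `Q`; it equals the Sylvester resultant `S0` of `T` and `Q`. Once `Δ_Q ≥ 0` the
roots `ρ±` are real, so `S0 = 0` produces a real common root. Finally `p2 > 0` on a torus with
`0 < r < R`, so a real root of `T` forces `p0 = -(z^4 + p2 z^2) ≤ 0`.
-/

/-- The resultant of `z^4 + p2 z^2 + p0` and `z^2 + q1 z + q0` with respect to `z`,
as the determinant of the Sylvester matrix. -/
def sylvRes (p2 p0 q1 q0 : ℝ) : ℝ :=
  (!![(1 : ℝ), 0, p2, 0, p0, 0;
      0, 1, 0, p2, 0, p0;
      1, q1, q0, 0, 0, 0;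
      0, 1, q1, q0, 0, 0;
      0, 0, 1, q1, q0, 0;
      0, 0, 0, 1, q1, q0]).det

def quadLinRes (q1 q0 c1 c0 : ℝ) : ℝ :=
  c0 ^ 2 - c0 * c1 * q1 + c1 ^ 2 * q0

theorem quadLinRes_eq_zero_of_common_root {q1 q0 c1 c0 z : ℝ}
    (hQ : z ^ 2 + q1 * z + q0 = 0) (hL : c1 * z + c0 = 0) : quadLinRes q1 q0 c1 c0 = 0 := by
  unfold quadLinRes
  linear_combination c1 ^ 2 * hQ + (c0 - c1 * z - c1 * q1) * hL

theorem exists_common_root_of_quadLinRes_eq_zero {q1 q0 c1 c0 : ℝ}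
    (hres : quadLinRes q1 q0 c1 c0 = 0) (hdisc : 0 ≤ q1 ^ 2 - 4 * q0) :
    ∃ z : ℝ, z ^ 2 + q1 * z + q0 = 0 ∧ c1 * z + c0 = 0 := by
  set s := √(q1 ^ 2 - 4 * q0)
  have hs : s ^ 2 = q1 ^ 2 - 4 * q0 := Real.sq_sqrt hdisc
  have hroot : ∀ z, z = (-q1 + s) / 2 ∨ z = (-q1 - s) / 2 → z ^ 2 + q1 * z + q0 = 0 := by
    rintro z (rfl | rfl) <;> linear_combination hs / 4
  have hfactor : (c1 * ((-q1 + s) / 2) + c0) * (c1 * ((-q1 - s) / 2) + c0) = 0 := by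
    unfold quadLinRes at hres
    linear_combination hres - c1 ^ 2 / 4 * hs
  rcases mul_eq_zero.mp hfactor with h | h
  · exact ⟨_, hroot _ (.inl rfl), h⟩
  · exact ⟨_, hroot _ (.inr rfl), h⟩

theorem exists_common_root_quadratic_linear_iff (q1 q0 c1 c0 : ℝ) :
    (∃ z : ℝ, z ^ 2 + q1 * z + q0 = 0 ∧ c1 * z + c0 = 0) ↔
      quadLinRes q1 q0 c1 c0 = 0 ∧ 0 ≤ q1 ^ 2 - 4 * q0 := by
  refine ⟨fun ⟨z, hQ, hL⟩ => ⟨quadLinRes_eq_zero_of_common_root hQ hL, ?_⟩,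
    fun ⟨hres, hdisc⟩ => exists_common_root_of_quadLinRes_eq_zero hres hdisc⟩
  have hdisc : q1 ^ 2 - 4 * q0 = (2 * z + q1) ^ 2 := by linear_combination -4 * hQ
  exact hdisc ▸ sq_nonneg _

def remCoeff1 (p2 q1 q0 : ℝ) : ℝ := -q1 * (p2 - 2 * q0 + q1 ^ 2)

def remCoeff0 (p2 p0 q1 q0 : ℝ) : ℝ := p0 - q0 * (p2 - q0 + q1 ^ 2)

theorem biquadratic_eq_mul_add_rem (p2 p0 q1 q0 z : ℝ) :
    z ^ 4 + p2 * z ^ 2 + p0 =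
      (z ^ 2 - q1 * z + (p2 - q0 + q1 ^ 2)) * (z ^ 2 + q1 * z + q0)
        + (remCoeff1 p2 q1 q0 * z + remCoeff0 p2 p0 q1 q0) := by
  unfold remCoeff1 remCoeff0
  ring

set_option maxRecDepth 10000 in
theorem sylvRes_eq_quadLinRes (p2 p0 q1 q0 : ℝ) :
    sylvRes p2 p0 q1 q0 = quadLinRes q1 q0 (remCoeff1 p2 q1 q0) (remCoeff0 p2 p0 q1 q0) := by
  rw [sylvRes, quadLinRes, remCoeff1, remCoeff0]
  simp [Matrix.det_succ_row_zero, Fin.sum_univ_succ, Fin.succAbove]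
  ring

theorem exists_common_root_biquadratic_quadratic_iff (p2 p0 q1 q0 : ℝ) :
    (∃ z : ℝ, z ^ 4 + p2 * z ^ 2 + p0 = 0 ∧ z ^ 2 + q1 * z + q0 = 0) ↔
      sylvRes p2 p0 q1 q0 = 0 ∧ 0 ≤ q1 ^ 2 - 4 * q0 := by
  rw [sylvRes_eq_quadLinRes, ← exists_common_root_quadratic_linear_iff]
  refine exists_congr fun z => ?_
  rw [biquadratic_eq_mul_add_rem p2 p0 q1 q0 z]
  constructor
  · rintro ⟨hT, hQ⟩
    rw [hQ, mul_zero, zero_add] at hT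
    exact ⟨hQ, hT⟩
  · rintro ⟨hQ, hL⟩
    rw [hQ, hL, mul_zero, zero_add]
    exact ⟨rfl, rfl⟩

theorem const_nonpos_of_biquadratic_eq_zero {p2 p0 z : ℝ} (hp2 : 0 ≤ p2)
    (hT : z ^ 4 + p2 * z ^ 2 + p0 = 0) : p0 ≤ 0 := by
  nlinarith [pow_nonneg (sq_nonneg z) 2, mul_nonneg hp2 (sq_nonneg z)]

theorem stmt9_general (R r a0 b0 : ℝ) (hr : 0 < r) (hrR : r < R)
    (p2 p0 q1 q0 : ℝ)
    (hp2 : p2 = 2 * (R ^ 2 - r ^ 2 + a0 ^ 2 + b0 ^ 2)) :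
    (∃ z : ℝ, z ^ 4 + p2 * z ^ 2 + p0 = 0 ∧ z ^ 2 + q1 * z + q0 = 0)
      ↔ sylvRes p2 p0 q1 q0 = 0 ∧ p0 ≤ 0 ∧ q1 ^ 2 - 4 * q0 ≥ 0 := by
  have hp2_nonneg : 0 ≤ p2 := by
    rw [hp2]
    nlinarith [sq_nonneg a0, sq_nonneg b0]
  have hcommon := exists_common_root_biquadratic_quadratic_iff p2 p0 q1 q0
  constructor
  · rintro ⟨z, hT, hQ⟩
    obtain ⟨hres, hdisc⟩ := hcommon.mp ⟨z, hT, hQ⟩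
    exact ⟨hres, const_nonpos_of_biquadratic_eq_zero hp2_nonneg hT, hdisc⟩
  · rintro ⟨hres, -, hdisc⟩
    exact hcommon.mpr ⟨hres, hdisc⟩

/-- A point `(a0,b0)` lies in the projection onto `z = 0` of the real intersection
curve of the torus and the quadric iff `S0(a0,b0) = 0`, `Δ_T(a0,b0) ≤ 0` and
`Δ_Q(a0,b0) ≥ 0`. -/
theorem stmt9 (R r a b d e f g h i j a0 b0 : ℝ) (hr : 0 < r) (hrR : r < R)
    (p2 p0 q1 q0 : ℝ)
    (hp2 : p2 = 2 * (R ^ 2 - r ^ 2 + a0 ^ 2 + b0 ^ 2))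
    (hp0 : p0 = (R ^ 2 + 2 * R * r + r ^ 2 - a0 ^ 2 - b0 ^ 2)
      * (R ^ 2 - 2 * R * r + r ^ 2 - a0 ^ 2 - b0 ^ 2))
    (hq1 : q1 = e * a0 + f * b0 + i)
    (hq0 : q0 = a * a0 ^ 2 + b * b0 ^ 2 + d * a0 * b0 + g * a0 + h * b0 + j) :
    (∃ z : ℝ, z ^ 4 + p2 * z ^ 2 + p0 = 0 ∧ z ^ 2 + q1 * z + q0 = 0)
      ↔ sylvRes p2 p0 q1 q0 = 0 ∧ p0 ≤ 0 ∧ q1 ^ 2 - 4 * q0 ≥ 0 :=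
  stmt9_general R r a0 b0 hr hrR p2 p0 q1 q0 hp2
end

section
/- Let p0, p2, q0, q1 be real numbers with p2 > 0 and let S0 = (q0q1^2 + p2q0 - q0^2 - p0)^2 + q1^2(q1^2+p2-2q0)(p0-q0^2), Δ_T = p0, Δ_Q = q1^2 - 4q0. Then S0 = 0 ∧ Δ_T = 0 ∧ Δ_Q = 0 holds if and only if q1 = 0 ∧ q0 = 0 ∧ p0 = 0. -/
/-- For real `p0, p2, q0, q1` with `p2 > 0`:
`S0 = 0 ∧ Δ_T = 0 ∧ Δ_Q = 0` iff `q1 = 0 ∧ q0 = 0 ∧ p0 = 0`. -/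
theorem stmt12 (p0 p2 q0 q1 : ℝ) (hp2 : 0 < p2) :
    ((q0 * q1 ^ 2 + p2 * q0 - q0 ^ 2 - p0) ^ 2
          + q1 ^ 2 * (q1 ^ 2 + p2 - 2 * q0) * (p0 - q0 ^ 2) = 0
        ∧ p0 = 0 ∧ q1 ^ 2 - 4 * q0 = 0)
      ↔ (q1 = 0 ∧ q0 = 0 ∧ p0 = 0) := by
  constructor
  · rintro ⟨hS, hp0, hQ⟩
    have hq0 : q0 = q1 ^ 2 / 4 := by linarith
    have hq0nn : 0 ≤ q0 := by rw [hq0]; positivity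
    subst hp0
    have hq1sq : q1 ^ 2 = 4 * q0 := by linarith
    rw [hq1sq] at hS
    have key : (q0 * (q0 + p2)) ^ 2 = 0 := by linear_combination hS
    have key2 : q0 * (q0 + p2) = 0 := by
      exact pow_eq_zero_iff (n := 2) (by norm_num) |>.mp key
    have hq0z : q0 = 0 := by
      rcases mul_eq_zero.mp key2 with h | h
      · exact h
      · linarith
    have hq1 : q1 = 0 := by nlinarith [sq_nonneg q1]
    exact ⟨hq1, hq0z, rfl⟩
  · rintro ⟨h1, h2, h3⟩
    subst h1; subst h2; subst h3
    norm_num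
end

section
/- Let 0 < r < R and let T, Q, S0, Δ_T, Δ_Q be as for the torus–quadric intersection. For a real point (x0,y0): S0(x0,y0) = 0, Δ_T(x0,y0) = 0, and Δ_Q(x0,y0) ≥ 0 hold if and only if q0(x0,y0) = 0 and Δ_T(x0,y0) = 0. -/
set_option maxRecDepth 4000 in
lemma sylvRes_zero (p2 q1 q0 : ℝ) :
    sylvRes p2 0 q1 q0 = q0 ^ 2 * ((q0 - p2) ^ 2 + q1 ^ 2 * p2) := by
  simp [sylvRes, Matrix.det_succ_row_zero, Fin.sum_univ_succ, Fin.succAbove]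
  ring

lemma sylvRes_zero_eq_zero_iff {p2 q1 q0 : ℝ} (hp2 : 0 < p2) (hΔ : 0 ≤ q1 ^ 2 - 4 * q0) :
    sylvRes p2 0 q1 q0 = 0 ↔ q0 = 0 := by
  rw [sylvRes_zero, mul_eq_zero, pow_eq_zero_iff two_ne_zero, or_iff_left_iff_imp]
  intro h
  obtain ⟨hsq, hprod⟩ := (add_eq_zero_iff_of_nonneg (sq_nonneg _) (by positivity)).1 h
  have hq1 : q1 = 0 := by simpa [hp2.ne'] using hprod
  have hq0 : q0 = p2 := sub_eq_zero.1 (pow_eq_zero_iff two_ne_zero |>.1 hsq)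
  subst hq1 hq0
  linarith

theorem stmt13_general (R r x0 y0 : ℝ) (hr : 0 < r) (hrR : r < R)
    (p2 p0 q1 q0 : ℝ)
    (hp2 : p2 = 2 * (R ^ 2 - r ^ 2 + x0 ^ 2 + y0 ^ 2)) :
    (sylvRes p2 p0 q1 q0 = 0 ∧ p0 = 0 ∧ q1 ^ 2 - 4 * q0 ≥ 0)
      ↔ (q0 = 0 ∧ p0 = 0) := by
  have hp2_pos : 0 < p2 := by
    rw [hp2]
    nlinarith [sq_nonneg x0, sq_nonneg y0]
  constructor
  · rintro ⟨hS, rfl, hΔ⟩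
    exact ⟨(sylvRes_zero_eq_zero_iff hp2_pos hΔ).1 hS, rfl⟩
  · rintro ⟨rfl, rfl⟩
    refine ⟨by rw [sylvRes_zero]; ring, rfl, ?_⟩
    simpa using sq_nonneg q1

/-- For a real point `(x0,y0)`: `S0 = 0`, `Δ_T = 0` and `Δ_Q ≥ 0` hold iff
`q0(x0,y0) = 0` and `Δ_T(x0,y0) = 0`. -/
theorem stmt13 (R r a b d e f g h i j x0 y0 : ℝ) (hr : 0 < r) (hrR : r < R)
    (p2 p0 q1 q0 : ℝ)
    (hp2 : p2 = 2 * (R ^ 2 - r ^ 2 + x0 ^ 2 + y0 ^ 2))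
    (hp0 : p0 = (R ^ 2 + 2 * R * r + r ^ 2 - x0 ^ 2 - y0 ^ 2)
      * (R ^ 2 - 2 * R * r + r ^ 2 - x0 ^ 2 - y0 ^ 2))
    (hq1 : q1 = e * x0 + f * y0 + i)
    (hq0 : q0 = a * x0 ^ 2 + b * y0 ^ 2 + d * x0 * y0 + g * x0 + h * y0 + j) :
    (sylvRes p2 p0 q1 q0 = 0 ∧ p0 = 0 ∧ q1 ^ 2 - 4 * q0 ≥ 0)
      ↔ (q0 = 0 ∧ p0 = 0) :=
  stmt13_general R r x0 y0 hr hrR p2 p0 q1 q0 hp2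
end

section
/- Let 0 < r < R and let T, Q, S0, Δ_T, Δ_Q be as for the torus–quadric intersection. For a real point (x0,y0): S0(x0,y0) = 0, Δ_Q(x0,y0) = 0 and Δ_T(x0,y0) ≤ 0 hold if and only if 16·p0(x0,y0) + 4·p2(x0,y0)·q1(x0,y0)^2 + q1(x0,y0)^4 = 0 and Δ_Q(x0,y0) = 0. -/
set_option maxRecDepth 8000 in
set_option maxHeartbeats 2000000 in
lemma sylv_special (p2 p0 q1 : ℝ) :
    sylvRes p2 p0 q1 (q1 ^ 2 / 4) = ((16 * p0 + 4 * p2 * q1 ^ 2 + q1 ^ 4) / 16) ^ 2 := by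
  simp +decide [sylvRes, Matrix.det_succ_row_zero, Fin.sum_univ_succ, Fin.succAbove,
    show ((2:Fin 3).castSucc) = 2 by decide, show ((2:Fin 4).castSucc) = 2 by decide,
    show ((2:Fin 5).castSucc) = 2 by decide,
    show ((2:Fin 3).succ.castSucc) = 3 by decide, show ((2:Fin 4).succ.castSucc) = 3 by decide,
    show ((2:Fin 3).castSucc.castSucc) = 2 by decide, show ((2:Fin 4).castSucc.castSucc) = 2 by decide,
    show ((2:Fin 3).succ.castSucc.castSucc) = 3 by decide, show ((3:Fin 5).castSucc) = 3 by decide]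
  ring

/-- For a real point `(x0,y0)`: `S0 = 0`, `Δ_Q = 0` and `Δ_T ≤ 0` hold iff
`16 p0 + 4 p2 q1^2 + q1^4 = 0` and `Δ_Q = 0`. -/
theorem stmt14 (R r a b d e f g h i j x0 y0 : ℝ) (hr : 0 < r) (hrR : r < R)
    (p2 p0 q1 q0 : ℝ)
    (hp2 : p2 = 2 * (R ^ 2 - r ^ 2 + x0 ^ 2 + y0 ^ 2))
    (hp0 : p0 = (R ^ 2 + 2 * R * r + r ^ 2 - x0 ^ 2 - y0 ^ 2)
      * (R ^ 2 - 2 * R * r + r ^ 2 - x0 ^ 2 - y0 ^ 2))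
    (hq1 : q1 = e * x0 + f * y0 + i)
    (hq0 : q0 = a * x0 ^ 2 + b * y0 ^ 2 + d * x0 * y0 + g * x0 + h * y0 + j) :
    (sylvRes p2 p0 q1 q0 = 0 ∧ q1 ^ 2 - 4 * q0 = 0 ∧ p0 ≤ 0)
      ↔ (16 * p0 + 4 * p2 * q1 ^ 2 + q1 ^ 4 = 0 ∧ q1 ^ 2 - 4 * q0 = 0) := by
  have hp2pos : 0 < p2 := by nlinarith [sq_nonneg x0, sq_nonneg y0, sq_nonneg (R + r)]
  constructor
  · rintro ⟨hS, hΔ, _⟩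
    have hq : q0 = q1 ^ 2 / 4 := by linarith
    rw [hq, sylv_special] at hS
    have : (16 * p0 + 4 * p2 * q1 ^ 2 + q1 ^ 4) / 16 = 0 := by
      exact pow_eq_zero_iff (n := 2) (by norm_num) |>.mp hS
    exact ⟨by linarith, hΔ⟩
  · rintro ⟨hE, hΔ⟩
    have hq : q0 = q1 ^ 2 / 4 := by linarith
    refine ⟨?_, hΔ, ?_⟩
    · rw [hq, sylv_special, hE]; norm_num
    · nlinarith [sq_nonneg q1, sq_nonneg (q1 ^ 2), mul_nonneg hp2pos.le (sq_nonneg q1)]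
end

section
/- Let A, B, C, R, r be real numbers with A, B, C nonzero, R > 0, and consider the 3×3 symmetric matrix C_mat with entries C11 = B^2(A-C)^2, C12 = AB(B-C)(A-C), C13 = AB^2(-AR^2 - Ar^2 - CR^2 + Cr^2 + CA - C^2), C22 = A^2(B-C)^2, C23 = A^2B(-BR^2 - Br^2 - CR^2 + Cr^2 + BC - C^2), C33 = A^2B^2(R^2 - r^2 + C)^2. Then the determinant of the top-left 2×2 submatrix of C_mat is zero, and det(C_mat) = -4A^4B^4C^2R^4(A-B)^2, which is ≤ 0. -/
/-- For the conic matrix obtained from the torus–ellipsoid resultant after the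
substitution `X = x^2`, `Y = y^2`: the top-left 2×2 minor vanishes, and
`det(C_mat) = -4 A^4 B^4 C^2 R^4 (A-B)^2 ≤ 0`. -/
theorem stmt19 (A B C R r : ℝ) (hA : A ≠ 0) (hB : B ≠ 0) (hC : C ≠ 0) (hR : 0 < R) :
    (!![B ^ 2 * (A - C) ^ 2, A * B * (B - C) * (A - C);
        A * B * (B - C) * (A - C), A ^ 2 * (B - C) ^ 2] : Matrix (Fin 2) (Fin 2) ℝ).det = 0
    ∧ (!![B ^ 2 * (A - C) ^ 2,
          A * B * (B - C) * (A - C),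
          A * B ^ 2 * (-A * R ^ 2 - A * r ^ 2 - C * R ^ 2 + C * r ^ 2 + C * A - C ^ 2);
          A * B * (B - C) * (A - C),
          A ^ 2 * (B - C) ^ 2,
          A ^ 2 * B * (-B * R ^ 2 - B * r ^ 2 - C * R ^ 2 + C * r ^ 2 + B * C - C ^ 2);
          A * B ^ 2 * (-A * R ^ 2 - A * r ^ 2 - C * R ^ 2 + C * r ^ 2 + C * A - C ^ 2),
          A ^ 2 * B * (-B * R ^ 2 - B * r ^ 2 - C * R ^ 2 + C * r ^ 2 + B * C - C ^ 2),
          A ^ 2 * B ^ 2 * (R ^ 2 - r ^ 2 + C) ^ 2] : Matrix (Fin 3) (Fin 3) ℝ).det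
        = -4 * A ^ 4 * B ^ 4 * C ^ 2 * R ^ 4 * (A - B) ^ 2
    ∧ (!![B ^ 2 * (A - C) ^ 2,
          A * B * (B - C) * (A - C),
          A * B ^ 2 * (-A * R ^ 2 - A * r ^ 2 - C * R ^ 2 + C * r ^ 2 + C * A - C ^ 2);
          A * B * (B - C) * (A - C),
          A ^ 2 * (B - C) ^ 2,
          A ^ 2 * B * (-B * R ^ 2 - B * r ^ 2 - C * R ^ 2 + C * r ^ 2 + B * C - C ^ 2);
          A * B ^ 2 * (-A * R ^ 2 - A * r ^ 2 - C * R ^ 2 + C * r ^ 2 + C * A - C ^ 2),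
          A ^ 2 * B * (-B * R ^ 2 - B * r ^ 2 - C * R ^ 2 + C * r ^ 2 + B * C - C ^ 2),
          A ^ 2 * B ^ 2 * (R ^ 2 - r ^ 2 + C) ^ 2] : Matrix (Fin 3) (Fin 3) ℝ).det ≤ 0 := by
  have h2 : (!![B ^ 2 * (A - C) ^ 2,
          A * B * (B - C) * (A - C),
          A * B ^ 2 * (-A * R ^ 2 - A * r ^ 2 - C * R ^ 2 + C * r ^ 2 + C * A - C ^ 2);
          A * B * (B - C) * (A - C),
          A ^ 2 * (B - C) ^ 2,
          A ^ 2 * B * (-B * R ^ 2 - B * r ^ 2 - C * R ^ 2 + C * r ^ 2 + B * C - C ^ 2);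
          A * B ^ 2 * (-A * R ^ 2 - A * r ^ 2 - C * R ^ 2 + C * r ^ 2 + C * A - C ^ 2),
          A ^ 2 * B * (-B * R ^ 2 - B * r ^ 2 - C * R ^ 2 + C * r ^ 2 + B * C - C ^ 2),
          A ^ 2 * B ^ 2 * (R ^ 2 - r ^ 2 + C) ^ 2] : Matrix (Fin 3) (Fin 3) ℝ).det
        = -4 * A ^ 4 * B ^ 4 * C ^ 2 * R ^ 4 * (A - B) ^ 2 := by
    simp [Matrix.det_fin_three]; ring
  refine ⟨by simp [Matrix.det_fin_two]; ring, h2, ?_⟩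
  rw [h2]
  nlinarith [sq_nonneg (A^2*B^2*C*R^2*(A-B))]
end
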